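/- arXiv:1101.0794 — 4 statements merged into one kernel-verified Lean document; each statement's English description precedes it below -/
import Mathlib

section
/- For the Bernoulli lemniscate domain Ω = {z ∈ ℂ : |z² - 1| < 1}, the even harmonic moments are M_{2k}(Ω) = 2^{2k+1}(k!)² / (π (2k+1)!), where M_m(Ω) = (1/π)∫_Ω z^m dA. -/
/-!
In polar coordinates `z = r e^{iθ}` the lemniscate is `r² < 2 cos 2θ`, so integrating
`z^{2k} = r^{2k} e^{2ikθ}` against `r dr` first gives
`∫_Ω z^{2k} = (2k+2)⁻¹ ∫_{-π}^{π} (2 cos 2θ)₊^{k+1} e^{2ikθ} dθ`.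
Substituting `x = 2θ` and using periodicity and the support of the positive part, this is
`(2k+2)⁻¹ I_{k+1}`, where the integrand of
`I_n = ∫_{-π/2}^{π/2} (2 cos x)^n e^{i(n-1)x} dx` equals `(1 + e^{2ix})^n e^{-ix}`.
As `1 + e^{2ix}` vanishes at `x = ±π/2`, integrating the derivative of
`(1 + e^{2ix})^{n+1} e^{-ix}` gives `(2n+1) I_{n+1} = (2n+2) I_n`; with `I_0 = 2` this yields
`I_n = 2^{2n+1} (n!)² / (2n)!`.
-/

set_option autoImplicit false

open MeasureTheory Real

noncomputable def bernoulliLemniscate : Set ℂ := {z : ℂ | ‖z ^ 2 - 1‖ < 1}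

open Set
open Complex (I)
open scoped Complex Nat

theorem isOpen_bernoulliLemniscate : IsOpen bernoulliLemniscate :=
  isOpen_lt (by fun_prop) continuous_const

theorem polarCoord_symm_mem_bernoulliLemniscate_iff {r : ℝ} (hr : 0 < r) (θ : ℝ) :
    Complex.polarCoord.symm (r, θ) ∈ bernoulliLemniscate ↔ r ^ 2 < 2 * cos (2 * θ) := by
  have h : ‖Complex.polarCoord.symm (r, θ) ^ 2 - 1‖ ^ 2
      = r ^ 2 * (r ^ 2 - 2 * cos (2 * θ)) + 1 := by
    rw [Complex.sq_norm, Complex.polarCoord_symm_apply, Complex.normSq_apply, cos_two_mul]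
    simp only [Complex.ofReal_cos, Complex.ofReal_sin, sq, Complex.sub_re, Complex.mul_re,
      Complex.ofReal_re, Complex.add_re, Complex.cos_ofReal_re, Complex.sin_ofReal_re, Complex.I_re,
      mul_zero, Complex.sin_ofReal_im, Complex.I_im, mul_one, sub_self, add_zero, Complex.ofReal_im,
      Complex.add_im, Complex.cos_ofReal_im, Complex.mul_im, zero_add, zero_mul, sub_zero,
      Complex.one_re, Complex.sub_im, Complex.one_im]
    linear_combination (r ^ 4 * (sin θ ^ 2 + cos θ ^ 2 + 1) + 2 * r ^ 2) * sin_sq_add_cos_sq θ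
  change ‖_‖ < 1 ↔ _
  rw [← sq_lt_one_iff₀ (norm_nonneg _), h]
  constructor <;> intro <;> nlinarith [pow_pos hr 2]

theorem Complex.continuous_polarCoord_symm : Continuous Complex.polarCoord.symm := by
  have : (Complex.polarCoord.symm : ℝ × ℝ → ℂ) =
      fun p => p.1 * (cos p.2 + sin p.2 * I) := by
    ext p; simp
  rw [this]; fun_prop

theorem setIntegral_polarCoord_target {E : Type*} [NormedAddCommGroup E] [NormedSpace ℝ E]
    {F : ℝ × ℝ → E} (hF : IntegrableOn F polarCoord.target) :
    ∫ p in polarCoord.target, F p = ∫ θ in Ioo (-π) π, ∫ r in Ioi 0, F (r, θ) := by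
  rw [polarCoord_target, Measure.volume_eq_prod] at hF ⊢
  rw [← setIntegral_prod_swap]
  exact setIntegral_prod (F ∘ Prod.swap) hF.swap

theorem integral_bernoulliLemniscate {E : Type*} [NormedAddCommGroup E] [NormedSpace ℝ E]
    {f : ℂ → E} (hf : Continuous f) :
    ∫ z in bernoulliLemniscate, f z =
      ∫ θ in -π..π, ∫ r in 0..√(2 * cos (2 * θ)),
        r • f (Complex.polarCoord.symm (r, θ)) := by
  set S : Set (ℝ × ℝ) := {p | 0 < p.1} ∩ {p | p.1 < √(2 * cos (2 * p.2))}
  have hS : IsOpen S :=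
    (isOpen_lt continuous_const continuous_fst).inter (isOpen_lt continuous_fst (by fun_prop))
  set G : ℝ × ℝ → E := fun p => p.1 • f (Complex.polarCoord.symm p)
  have hpolar : ∀ p ∈ polarCoord.target,
      p.1 • bernoulliLemniscate.indicator f (Complex.polarCoord.symm p) = S.indicator G p := by
    rintro ⟨r, θ⟩ ⟨hr, -⟩
    have hmem : Complex.polarCoord.symm (r, θ) ∈ bernoulliLemniscate ↔ (r, θ) ∈ S := by
      rw [polarCoord_symm_mem_bernoulliLemniscate_iff hr]
      simp only [S, mem_inter_iff, mem_ofPred_eq, hr.out, true_and]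
      exact (Real.lt_sqrt hr.out.le).symm
    by_cases h : (r, θ) ∈ S
    · rw [indicator_of_mem (hmem.2 h), indicator_of_mem h]
    · rw [indicator_of_notMem (mt hmem.1 h), indicator_of_notMem h, smul_zero]
  have hint : IntegrableOn (S.indicator G) polarCoord.target := by
    rw [integrableOn_indicator_iff hS.measurableSet]
    have hG : Continuous G := by
      have := Complex.continuous_polarCoord_symm; fun_prop
    refine (hG.continuousOn.integrableOn_compact
      ((isCompact_Icc (a := 0) (b := 2)).prod (isCompact_Icc (a := -π) (b := π)))).mono_set ?_
    rintro ⟨r, θ⟩ ⟨⟨hr, hrθ⟩, -, hθ⟩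
    have hr2 : r ^ 2 < 2 * cos (2 * θ) := (Real.lt_sqrt hr.le).1 hrθ
    exact ⟨⟨hr.le, by nlinarith [cos_le_one (2 * θ)]⟩, hθ.1.le, hθ.2.le⟩
  rw [← integral_indicator isOpen_bernoulliLemniscate.measurableSet,
    ← Complex.integral_comp_polarCoord_symm,
    setIntegral_congr_fun polarCoord.open_target.measurableSet hpolar,
    setIntegral_polarCoord_target hint, intervalIntegral.integral_of_le (by linarith [pi_pos]),
    integral_Ioc_eq_integral_Ioo]
  refine setIntegral_congr_fun measurableSet_Ioo fun θ _ => ?_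
  change ∫ r in Ioi 0, (Ioo 0 √(2 * cos (2 * θ))).indicator (fun r => G (r, θ)) r = _
  rw [intervalIntegral.integral_of_le (sqrt_nonneg _), integral_Ioc_eq_integral_Ioo,
    setIntegral_indicator measurableSet_Ioo, inter_eq_right.2 Ioo_subset_Ioi_self]

theorem Complex.polarCoord_symm_pow (r θ : ℝ) (n : ℕ) :
    Complex.polarCoord.symm (r, θ) ^ n = (r ^ n : ℝ) * cexp (n * θ * I) := by
  have h : Complex.polarCoord.symm (r, θ) = r * cexp (θ * I) := by
    rw [Complex.polarCoord_symm_apply, Complex.exp_mul_I, ← Complex.ofReal_cos,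
      ← Complex.ofReal_sin]
  rw [h, mul_pow, ← Complex.exp_nat_mul, Complex.ofReal_pow, mul_assoc]

theorem integral_zero_sqrt_pow_two_mul_add_one (k : ℕ) (c : ℝ) :
    ∫ r in 0..√c, r ^ (2 * k + 1) = max c 0 ^ (k + 1) / (2 * k + 2) := by
  rw [integral_pow, show 2 * k + 1 + 1 = 2 * (k + 1) by ring, pow_mul, sq_sqrt']
  push_cast
  ring

theorem Function.Periodic.intervalIntegral_comp_nat_mul {E : Type*} [NormedAddCommGroup E]
    [NormedSpace ℝ E] {f : ℝ → E} {T : ℝ} (hf : Function.Periodic f T)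
    (h_int : ∀ t₁ t₂, IntervalIntegrable f volume t₁ t₂) {n : ℕ} (hn : n ≠ 0)
    (t : ℝ) :
    ∫ x in t..t + T, f (n * x) = ∫ x in t..t + T, f x := by
  rw [intervalIntegral.integral_comp_mul_left f (Nat.cast_ne_zero.2 hn),
    show (n : ℝ) * (t + T) = n * t + (n : ℤ) • T by rw [zsmul_eq_mul]; push_cast; ring,
    hf.intervalIntegral_add_zsmul_eq n _ h_int, hf.intervalIntegral_add_eq _ t, natCast_zsmul,
    ← Nat.cast_smul_eq_nsmul ℝ, inv_smul_smul₀ (Nat.cast_ne_zero.2 hn)]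

/-- Equal to `(2 cos x)^n e^{i(n-1)x}`, see `cosPowKernel_succ_eq`. -/
noncomputable def cosPowKernel (n : ℕ) (x : ℝ) : ℂ :=
  (1 + cexp (2 * I * x)) ^ n * cexp (-I * x)

theorem continuous_cosPowKernel (n : ℕ) : Continuous (cosPowKernel n) := by
  unfold cosPowKernel; fun_prop

theorem cosPowKernel_succ_eq (k : ℕ) (x : ℝ) :
    cosPowKernel (k + 1) x = ((2 * cos x) ^ (k + 1) : ℝ) * cexp (k * x * I) := by
  have h : 1 + cexp (2 * I * x) = 2 * Complex.cos x * cexp (x * I) := by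
    rw [Complex.two_cos, add_mul, ← Complex.exp_add, ← Complex.exp_add, neg_mul, neg_add_cancel,
      Complex.exp_zero, add_comm]
    ring_nf
  rw [cosPowKernel, h, mul_pow, mul_assoc, ← Complex.exp_nat_mul, ← Complex.exp_add]
  push_cast
  ring_nf

theorem cosPowKernel_succ_neg_pi_div_two (n : ℕ) : cosPowKernel (n + 1) (-(π / 2)) = 0 := by
  rw [cosPowKernel, show 2 * I * ((-(π / 2) : ℝ) : ℂ) = -(π * I) by push_cast; ring]
  simp

theorem cosPowKernel_succ_pi_div_two (n : ℕ) : cosPowKernel (n + 1) (π / 2) = 0 := by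
  rw [cosPowKernel, show 2 * I * ((π / 2 : ℝ) : ℂ) = π * I by push_cast; ring]
  simp

theorem hasDerivAt_cosPowKernel_succ (n : ℕ) (x : ℝ) :
    HasDerivAt (cosPowKernel (n + 1))
      (I * ((2 * n + 1) * cosPowKernel (n + 1) x - (2 * n + 2) * cosPowKernel n x)) x := by
  have he (c : ℂ) : HasDerivAt (fun z : ℂ => cexp (c * z)) (c * cexp (c * x)) x := by
    simpa [mul_comm] using ((hasDerivAt_id (x : ℂ)).const_mul c).cexp
  have hz := (((he (2 * I)).const_add 1).fun_pow (n + 1)).fun_mul (he (-I))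
  convert hz.comp_ofReal using 1
  · ext y; simp only [cosPowKernel]
  · simp only [cosPowKernel, Nat.add_sub_cancel]
    push_cast
    ring

theorem integral_cosPowKernel_succ (n : ℕ) :
    (2 * n + 1) * ∫ x in -(π / 2)..π / 2, cosPowKernel (n + 1) x =
      (2 * n + 2) * ∫ x in -(π / 2)..π / 2, cosPowKernel n x := by
  have hcont := continuous_cosPowKernel
  have h := intervalIntegral.integral_eq_sub_of_hasDerivAt
    (fun x _ => hasDerivAt_cosPowKernel_succ n x)
    ((by fun_prop : Continuous _).intervalIntegrable (-(π / 2)) (π / 2))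
  rw [cosPowKernel_succ_neg_pi_div_two, cosPowKernel_succ_pi_div_two, sub_zero,
    intervalIntegral.integral_const_mul, intervalIntegral.integral_sub,
    intervalIntegral.integral_const_mul, intervalIntegral.integral_const_mul] at h
  · simpa [Complex.I_ne_zero, sub_eq_zero] using h
  all_goals exact (by fun_prop : Continuous _).intervalIntegrable _ _

theorem integral_cosPowKernel_zero : ∫ x in -(π / 2)..π / 2, cosPowKernel 0 x = 2 := by
  have h : ∀ x : ℝ, cosPowKernel 0 x = cexp (-I * x) := fun x => by
    simp [cosPowKernel, mul_comm]
  simp_rw [h]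
  rw [integral_exp_mul_complex (neg_ne_zero.2 Complex.I_ne_zero),
    show -I * ((π / 2 : ℝ) : ℂ) = -(π / 2 * I) by push_cast; ring,
    show -I * ((-(π / 2) : ℝ) : ℂ) = π / 2 * I by push_cast; ring, Complex.exp_neg,
    Complex.exp_pi_div_two_mul_I, Complex.inv_I]
  field_simp
  norm_num

theorem integral_cosPowKernel (n : ℕ) :
    ∫ x in -(π / 2)..π / 2, cosPowKernel n x =
      2 ^ (2 * n + 1) * (n ! : ℂ) ^ 2 / (2 * n)! := by
  induction n with
  | zero => simp [integral_cosPowKernel_zero]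
  | succ n ih =>
    have h2n : (2 * n + 1 : ℂ) ≠ 0 := by norm_cast
    have h2n' : (2 * n + 1 + 1 : ℂ) ≠ 0 := by norm_cast
    have hfac : ((2 * n)! : ℂ) ≠ 0 := Nat.cast_ne_zero.2 (Nat.factorial_ne_zero _)
    rw [eq_div_of_mul_eq h2n ((mul_comm _ _).trans (integral_cosPowKernel_succ n)), ih,
      show 2 * (n + 1) = 2 * n + 1 + 1 by ring, Nat.factorial_succ, Nat.factorial_succ,
      Nat.factorial_succ]
    push_cast
    field_simp
    ring

/-- The radial integral of `z^{2k} r` over `0 < r < √(2 cos x)`, up to the factor `(2k+2)⁻¹`,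
as a function of `x = 2θ`; the `max` records that the ray is empty where `cos x ≤ 0`. -/
noncomputable def lemniscateAngularDensity (k : ℕ) (x : ℝ) : ℂ :=
  (max (2 * cos x) 0 ^ (k + 1) : ℝ) * cexp (k * x * I)

theorem continuous_lemniscateAngularDensity (k : ℕ) :
    Continuous (lemniscateAngularDensity k) := by
  unfold lemniscateAngularDensity; fun_prop

theorem periodic_lemniscateAngularDensity (k : ℕ) :
    Function.Periodic (lemniscateAngularDensity k) (2 * π) := fun x => by
  simp only [lemniscateAngularDensity, cos_add_two_pi]
  push_cast
  rw [show (k : ℂ) * (x + 2 * π) * I = k * x * I + k * (2 * π * I) by ring, Complex.exp_add,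
    Complex.exp_nat_mul_two_pi_mul_I, mul_one]

theorem lemniscateAngularDensity_eq_zero {k : ℕ} {x : ℝ} (hx : cos x ≤ 0) :
    lemniscateAngularDensity k x = 0 := by
  simp [lemniscateAngularDensity, max_eq_right (by linarith : 2 * cos x ≤ 0)]

theorem lemniscateAngularDensity_eq_cosPowKernel {k : ℕ} {x : ℝ} (hx : 0 ≤ cos x) :
    lemniscateAngularDensity k x = cosPowKernel (k + 1) x := by
  rw [lemniscateAngularDensity, cosPowKernel_succ_eq, max_eq_left (by linarith)]

theorem integral_lemniscateAngularDensity (k : ℕ) :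
    ∫ x in -π..π, lemniscateAngularDensity k x =
      ∫ x in -(π / 2)..π / 2, cosPowKernel (k + 1) x := by
  have hint := (continuous_lemniscateAngularDensity k).intervalIntegrable (μ := volume)
  have hper : ∫ x in -π..π, lemniscateAngularDensity k x
      = ∫ x in -(π / 2)..(π + π / 2), lemniscateAngularDensity k x := by
    simpa [show -π + 2 * π = π by ring, show -(π / 2) + 2 * π = π + π / 2 by ring] using
      (periodic_lemniscateAngularDensity k).intervalIntegral_add_eq (-π) (-(π / 2))
  have hvanish : ∫ x in π / 2..(π + π / 2), lemniscateAngularDensity k x = 0 := by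
    rw [intervalIntegral.integral_congr (g := fun _ => 0), intervalIntegral.integral_zero]
    intro x hx
    rw [uIcc_of_le (by linarith [pi_pos])] at hx
    exact lemniscateAngularDensity_eq_zero (cos_nonpos_of_pi_div_two_le_of_le hx.1 hx.2)
  rw [hper, ← intervalIntegral.integral_add_adjacent_intervals (hint _ _) (hint _ _), hvanish,
    add_zero]
  refine intervalIntegral.integral_congr fun x hx => ?_
  rw [uIcc_of_le (by linarith [pi_pos])] at hx
  exact lemniscateAngularDensity_eq_cosPowKernel (cos_nonneg_of_mem_Icc hx)

theorem integral_bernoulliLemniscate_pow_two_mul (k : ℕ) :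
    ∫ z in bernoulliLemniscate, z ^ (2 * k) =
      (∫ x in -π..π, lemniscateAngularDensity k x) / (2 * k + 2) := by
  have hradial : ∀ θ : ℝ,
      ∫ r in 0..√(2 * cos (2 * θ)), r • Complex.polarCoord.symm (r, θ) ^ (2 * k) =
        lemniscateAngularDensity k (2 * θ) / (2 * k + 2) := fun θ => by
    simp_rw [Complex.polarCoord_symm_pow, Complex.real_smul, ← mul_assoc, ← Complex.ofReal_mul,
      ← pow_succ']
    rw [intervalIntegral.integral_mul_const, intervalIntegral.integral_ofReal,
      integral_zero_sqrt_pow_two_mul_add_one, lemniscateAngularDensity]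
    push_cast
    rw [div_mul_eq_mul_div, show 2 * (k : ℂ) * θ * I = k * (2 * θ) * I by ring]
  have hdouble := (periodic_lemniscateAngularDensity k).intervalIntegral_comp_nat_mul
    (continuous_lemniscateAngularDensity k).intervalIntegrable two_ne_zero (-π)
  rw [show -π + 2 * π = π by ring, Nat.cast_ofNat] at hdouble
  rw [integral_bernoulliLemniscate (continuous_pow _), intervalIntegral.integral_congr
    fun θ _ => hradial θ, intervalIntegral.integral_div, hdouble]

/-- Even harmonic moments of the Bernoulli lemniscate:
`M_{2k}(Ω) = 2^{2k+1} (k!)² / (π (2k+1)!)`. -/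
theorem bernoulli_even_moments (k : ℕ) :
    (1 / (π : ℂ)) * ∫ z in bernoulliLemniscate, z ^ (2 * k) =
      ((2 : ℂ) ^ (2 * k + 1) * (Nat.factorial k : ℂ) ^ 2) /
        ((π : ℂ) * (Nat.factorial (2 * k + 1) : ℂ)) := by
  rw [integral_bernoulliLemniscate_pow_two_mul, integral_lemniscateAngularDensity,
    integral_cosPowKernel, show 2 * (k + 1) = 2 * k + 1 + 1 by ring, Nat.factorial_succ,
    Nat.factorial_succ (2 * k + 1)]
  have hπ : (π : ℂ) ≠ 0 := Complex.ofReal_ne_zero.2 pi_ne_zero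
  have hk : (k + 1 : ℂ) ≠ 0 := by norm_cast
  have hfac : ((2 * k + 1)! : ℂ) ≠ 0 := Nat.cast_ne_zero.2 (Nat.factorial_ne_zero _)
  push_cast
  rw [show (2 * k + 1 + 1 : ℂ) = 2 * (k + 1) by ring,
    show (2 * k + 2 : ℂ) = 2 * (k + 1) by ring]
  field_simp
  ring
end

section
/- The Cauchy transform of the Bernoulli lemniscate domain Ω = {z : |z²-1| < 1}, given for large |z| by the series C_Ω(z) = ∑_{k ≥ 0} (2^{2k+1}(k!)²/(π(2k+1)!)) z^{-2k-1}, equals (2/π) · arcsin(1/z) / √(1 - 1/z²) for real z > √2. -/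
set_option autoImplicit false

open Real

/-!
Expanding `x / (1 - 4x²s(1-s))` as a geometric series in `s ∈ [0, 1]` and integrating term by term
turns each term into a Beta integral `∫₀¹ sᵏ (1-s)ᵏ ds = (k!)² / (2k+1)!`, while the integral of
the sum is elementary: since `1 - 4x²s(1-s) = (1 - x²) + x²(2s-1)²`, an antiderivative is
`arctan (x(2s-1)/√(1-x²)) / (2√(1-x²))`, and `arctan (x/√(1-x²)) = arcsin x`. Hence
`arcsin x / √(1-x²) = ∑ₖ 4ᵏ (k!)² / (2k+1)! · x^(2k+1)` for `|x| < 1`, and the theorem is the case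
`x = 1/z`, scaled by `2/π`.
-/

open intervalIntegral Nat

theorem integral_pow_mul_one_sub_pow_succ (a b : ℕ) :
    ∫ s in (0 : ℝ)..1, s ^ a * (1 - s) ^ (b + 1) =
      (b + 1 : ℝ) / (a + 1) * ∫ s in (0 : ℝ)..1, s ^ (a + 1) * (1 - s) ^ b := by
  have hu : ∀ s ∈ Set.uIcc (0 : ℝ) 1,
      HasDerivAt (fun s : ℝ => (1 - s) ^ (b + 1)) (-((b + 1 : ℝ) * (1 - s) ^ b)) s := fun s _ => by
    simpa [mul_comm] using ((hasDerivAt_id s).const_sub 1).fun_pow (b + 1)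
  have hv : ∀ s ∈ Set.uIcc (0 : ℝ) 1,
      HasDerivAt (fun s : ℝ => s ^ (a + 1) / (a + 1)) (s ^ a) s := fun s _ => by
    simpa [mul_div_cancel_left₀, Nat.cast_add_one_ne_zero] using
      (hasDerivAt_pow (a + 1) s).div_const (a + 1 : ℝ)
  have parts := integral_mul_deriv_eq_deriv_mul hu hv
    (by apply Continuous.intervalIntegrable; fun_prop)
    (by apply Continuous.intervalIntegrable; fun_prop)
  simp_rw [mul_comm (_ ^ a)]
  rw [parts]
  norm_num
  rw [← integral_const_mul]
  exact integral_congr fun s _ => by ring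

theorem integral_pow_mul_one_sub_pow (a b : ℕ) :
    ∫ s in (0 : ℝ)..1, s ^ a * (1 - s) ^ b = (a ! * b ! / (a + b + 1)! : ℝ) := by
  induction b generalizing a with
  | zero =>
    simp only [pow_zero, mul_one, integral_pow, add_zero, factorial_succ, factorial_zero]
    push_cast
    field_simp
    simp
  | succ b ih =>
    rw [integral_pow_mul_one_sub_pow_succ, ih, show a + 1 + b + 1 = a + (b + 1) + 1 by omega,
      factorial_succ a, factorial_succ b]
    push_cast
    field_simp

theorem integral_const_mul_mul_one_sub_pow (c : ℝ) (k : ℕ) :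
    ∫ s in (0 : ℝ)..1, (c * (s * (1 - s))) ^ k = c ^ k * (k ! ^ 2 / (2 * k + 1)! : ℝ) := by
  simp_rw [mul_pow c, mul_pow _ _ k]
  rw [integral_const_mul, integral_pow_mul_one_sub_pow, two_mul, sq]

theorem one_sub_four_mul_sq_mul_pos {x : ℝ} (hx : |x| < 1) (s : ℝ) :
    0 < 1 - 4 * x ^ 2 * (s * (1 - s)) := by
  have hx2 : x ^ 2 < 1 := sq_lt_one_iff_abs_lt_one x |>.mpr hx
  nlinarith [sq_nonneg x, sq_nonneg (x * (2 * s - 1))]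

theorem hasDerivAt_arctan_div_sqrt {x : ℝ} (hx : |x| < 1) (s : ℝ) :
    HasDerivAt (fun s => arctan (x * (2 * s - 1) / √(1 - x ^ 2)) / (2 * √(1 - x ^ 2)))
      (x / (1 - 4 * x ^ 2 * (s * (1 - s)))) s := by
  have hx2 : 0 < 1 - x ^ 2 := sub_pos.mpr (sq_lt_one_iff_abs_lt_one x |>.mpr hx)
  have hc2 : √(1 - x ^ 2) ^ 2 = 1 - x ^ 2 := sq_sqrt hx2.le
  have hinner : HasDerivAt (fun s => x * (2 * s - 1) / √(1 - x ^ 2)) (x * 2 / √(1 - x ^ 2)) s := by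
    simpa using ((((hasDerivAt_id s).const_mul 2).sub_const 1).const_mul x).div_const _
  refine (((hasDerivAt_arctan _).comp s hinner).div_const (2 * √(1 - x ^ 2))).congr_deriv ?_
  have hden := (one_sub_four_mul_sq_mul_pos hx s).ne'
  have hsq : 1 + (x * (2 * s - 1) / √(1 - x ^ 2)) ^ 2 =
      (1 - 4 * x ^ 2 * (s * (1 - s))) / √(1 - x ^ 2) ^ 2 := by
    rw [div_pow, hc2]
    field_simp
    ring
  rw [hsq]
  field_simp

theorem arcsin_div_sqrt_eq_integral {x : ℝ} (hx : |x| < 1) :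
    arcsin x / √(1 - x ^ 2) = ∫ s in (0 : ℝ)..1, x / (1 - 4 * x ^ 2 * (s * (1 - s))) := by
  rw [integral_eq_sub_of_hasDerivAt (fun s _ => hasDerivAt_arctan_div_sqrt hx s)
    (Continuous.intervalIntegrable (continuous_const.div (by fun_prop)
      fun s => (one_sub_four_mul_sq_mul_pos hx s).ne') _ _)]
  rw [arcsin_eq_arctan (abs_lt.mp hx)]
  norm_num
  rw [neg_div, arctan_neg]
  ring

theorem hasSum_arcsin_div_sqrt {x : ℝ} (hx : |x| < 1) :
    HasSum (fun k : ℕ => (4 ^ k * k ! ^ 2 / (2 * k + 1)! : ℝ) * x ^ (2 * k + 1))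
      (arcsin x / √(1 - x ^ 2)) := by
  have hx2 : x ^ 2 < 1 := sq_lt_one_iff_abs_lt_one x |>.mpr hx
  have hratio : ∀ s ∈ Set.uIoc (0 : ℝ) 1,
      0 ≤ 4 * x ^ 2 * (s * (1 - s)) ∧ 4 * x ^ 2 * (s * (1 - s)) ≤ x ^ 2 := by
    intro s hs
    rw [Set.uIoc_of_le zero_le_one] at hs
    obtain ⟨hs0, hs1⟩ := hs
    constructor
    · have : 0 ≤ s * (1 - s) := mul_nonneg hs0.le (by linarith)
      positivity
    · nlinarith [sq_nonneg x, mul_nonneg (sq_nonneg x) (sq_nonneg (2 * s - 1))]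
  have hterm : ∀ k : ℕ, (4 ^ k * k ! ^ 2 / (2 * k + 1)! : ℝ) * x ^ (2 * k + 1) =
      ∫ s in (0 : ℝ)..1, x * (4 * x ^ 2 * (s * (1 - s))) ^ k := fun k => by
    rw [integral_const_mul, integral_const_mul_mul_one_sub_pow, mul_pow, pow_succ x, pow_mul]
    ring
  simp_rw [hterm, arcsin_div_sqrt_eq_integral hx]
  refine hasSum_integral_of_dominated_convergence (fun k _ => |x| * (x ^ 2) ^ k)
    (fun k => (by fun_prop : Continuous _).aestronglyMeasurable) ?_ ?_
    intervalIntegrable_const ?_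
  · refine fun k => Filter.Eventually.of_forall fun s hs => ?_
    obtain ⟨h0, hle⟩ := hratio s hs
    rw [norm_mul, norm_pow, Real.norm_eq_abs, Real.norm_of_nonneg h0]
    gcongr
  · exact Filter.Eventually.of_forall fun _ _ =>
      (summable_geometric_of_lt_one (sq_nonneg x) hx2).mul_left _
  · refine Filter.Eventually.of_forall fun s hs => ?_
    obtain ⟨h0, hle⟩ := hratio s hs
    simpa only [div_eq_mul_inv] using (hasSum_geometric_of_lt_one h0 (hle.trans_lt hx2)).mul_left x

/-- The Cauchy transform of the Bernoulli lemniscate, given by the series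
`∑_{k≥0} (2^{2k+1}(k!)²/(π(2k+1)!)) z^{-(2k+1)}`, equals
`(2/π) arcsin(1/z) / √(1 - 1/z²)` for real `z > √2`. -/
theorem bernoulli_cauchy_transform (z : ℝ) (hz : Real.sqrt 2 < z) :
    HasSum
      (fun k : ℕ =>
        (2 ^ (2 * k + 1) * (Nat.factorial k : ℝ) ^ 2 / (π * (Nat.factorial (2 * k + 1) : ℝ))) /
          z ^ (2 * k + 1))
      ((2 / π) * Real.arcsin (1 / z) / Real.sqrt (1 - 1 / z ^ 2)) := by
  have hz1 : 1 < z := one_lt_sqrt_two.trans hz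
  have hx : |1 / z| < 1 := by
    rw [abs_of_pos (by positivity), div_lt_one (by positivity)]; exact hz1
  have hterm : ∀ k : ℕ,
      (2 ^ (2 * k + 1) * (k ! : ℝ) ^ 2 / (π * ((2 * k + 1)! : ℝ))) / z ^ (2 * k + 1) =
        2 / π * ((4 ^ k * k ! ^ 2 / (2 * k + 1)! : ℝ) * (1 / z) ^ (2 * k + 1)) := fun k => by
    rw [pow_succ, pow_mul, div_pow, one_pow]
    field_simp
    norm_num
  have hsum : 2 / π * arcsin (1 / z) / √(1 - 1 / z ^ 2) =
      2 / π * (arcsin (1 / z) / √(1 - (1 / z) ^ 2)) := by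
    rw [mul_div_assoc, one_div_pow]
  simp_rw [hterm, hsum]
  exact (hasSum_arcsin_div_sqrt hx).mul_left (2 / π)
end

section
/- Let φ(z,w) = ∑_{i,j=0}^d φ_{ij} z^i \bar{w}^j be a Hermitian polynomial (φ_{ji} = conj(φ_{ij})) with principal divisor a(z) = gcd of the coefficient polynomials φ_d(z), ..., φ_0(z) (where φ(z,w) = ∑_j φ_j(z) \bar{w}^j). Then φ(z,w) = a(z)·conj(a(w))·φ₀(z,w) where φ₀ is a primitive Hermitian polynomial (its coefficient polynomials in z have gcd 1). Conversely, if φ = a(z)conj(a(w))φ₀ with φ₀ primitive Hermitian, then a is, up to a unimodular constant, the principal divisor of φ. -/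
set_option autoImplicit false

open Polynomial

/-- A Hermitian polynomial `φ(z,w) = ∑ φ_{ij} z^i conj(w)^j`, encoded as an element of
`ℂ[z][w̄]` (outer variable `w̄`, coefficients `φ_j(z) ∈ ℂ[z]`), satisfies
`φ_{ji} = conj(φ_{ij})`. -/
def IsHermitian (P : Polynomial (Polynomial ℂ)) : Prop :=
  ∀ i j : ℕ, (P.coeff j).coeff i = (starRingEnd ℂ) ((P.coeff i).coeff j)

def IsPrimitivePoly (P : Polynomial (Polynomial ℂ)) : Prop :=
  ∀ b : Polynomial ℂ, (∀ j : ℕ, b ∣ P.coeff j) → IsUnit b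

/-- The polynomial `a(z)·conj(a(w))` viewed in `ℂ[z][w̄]`: `a` embedded as a constant in `w̄`,
times the conjugated polynomial in `w̄`. -/
noncomputable def sepProduct (a : Polynomial ℂ) : Polynomial (Polynomial ℂ) :=
  Polynomial.C a * (a.map (starRingEnd ℂ)).map Polynomial.C

/-!
The conjugate transpose `φ ↦ φ*`, `φ*(z, w) = conj (φ (w, z))`, is a ring involution of `ℂ[z][w̄]`
whose fixed points are the Hermitian polynomials, and it maps `a(z)` to `conj(a(w))`. So if `a`
divides every coefficient of a Hermitian `φ`, then both `a(z)` and `conj(a(w))` divide `φ`; since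
`conj(a(w))` is monic in `w̄`, it is primitive, and Gauss's lemma (the content is multiplicative)
lets `a(z)` be divided out of the cofactor as well. The content then computes the rest in both
directions: `content (a(z) conj(a(w)) φ₀) = a · content φ₀`.
-/

theorem Polynomial.Bivariate.coeff_coeff_swap {R : Type*} [CommSemiring R] (p : R[X][X])
    (i j : ℕ) : ((Bivariate.swap p).coeff j).coeff i = (p.coeff i).coeff j := by
  induction p using Polynomial.induction_on' with
  | add p q hp hq => simp only [map_add, coeff_add, hp, hq]
  | monomial n f =>
    simp only [Bivariate.swap_monomial, coeff_mul_C, coeff_map, coeff_monomial]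
    split_ifs with h
    · simp [h]
    · simp [coeff_X_pow, Ne.symm h]

section ConjSwap

variable {R : Type*} [CommSemiring R] [StarRing R]

noncomputable def conjSwap : R[X][X] →+* R[X][X] :=
  (mapRingHom (mapRingHom (starRingEnd R))).comp (Bivariate.swap (R := R)).toRingHom

theorem coeff_coeff_conjSwap (p : R[X][X]) (i j : ℕ) :
    ((conjSwap p).coeff j).coeff i = starRingEnd R ((p.coeff i).coeff j) := by
  simp [conjSwap, Bivariate.coeff_coeff_swap]

theorem conjSwap_conjSwap (p : R[X][X]) : conjSwap (conjSwap p) = p := by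
  ext j i
  simp only [coeff_coeff_conjSwap, starRingEnd_self_apply]

theorem conjSwap_C (a : R[X]) : conjSwap (C a) = (a.map (starRingEnd R)).map C := by
  ext j i
  simp only [coeff_coeff_conjSwap, coeff_C, coeff_map]
  split_ifs <;> simp [*]

end ConjSwap

theorem isHermitian_iff_conjSwap_eq (P : Polynomial (Polynomial ℂ)) :
    IsHermitian P ↔ conjSwap P = P := by
  refine ⟨fun h => ?_, fun h i j => by simpa only [h] using coeff_coeff_conjSwap P i j⟩
  ext j i
  rw [coeff_coeff_conjSwap, ← h]

theorem conjSwap_sepProduct (a : Polynomial ℂ) : conjSwap (sepProduct a) = sepProduct a := by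
  have h := congrArg conjSwap (conjSwap_C a)
  rw [conjSwap_conjSwap] at h
  rw [sepProduct, map_mul, conjSwap_C, ← h, mul_comm]

theorem sepProduct_ne_zero {a : Polynomial ℂ} (ha : a ≠ 0) : sepProduct a ≠ 0 := by
  refine mul_ne_zero (C_ne_zero.mpr ha) ?_
  rwa [Ne, Polynomial.map_eq_zero_iff C_injective,
    Polynomial.map_eq_zero_iff (starRingEnd ℂ).injective]

theorem isHermitian_sepProduct_mul_iff {a : Polynomial ℂ} (ha : a ≠ 0)
    (φ : Polynomial (Polynomial ℂ)) : IsHermitian (sepProduct a * φ) ↔ IsHermitian φ := by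
  simp only [isHermitian_iff_conjSwap_eq, map_mul, conjSwap_sepProduct,
    mul_right_inj' (sepProduct_ne_zero ha)]

theorem Polynomial.Monic.isPrimitive_map_C_map_conj {a : Polynomial ℂ} (ha : a.Monic) :
    ((a.map (starRingEnd ℂ)).map (C : ℂ →+* Polynomial ℂ)).IsPrimitive :=
  ((ha.map _).map _).isPrimitive

theorem content_sepProduct_mul {a : Polynomial ℂ} (ha : a.Monic)
    (φ : Polynomial (Polynomial ℂ)) : (sepProduct a * φ).content = a * φ.content := by
  rw [sepProduct, content_mul, content_mul, content_C, ha.normalize_eq_self,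
    ha.isPrimitive_map_C_map_conj.content_eq_one, mul_one]

theorem sepProduct_dvd_of_isHermitian {P : Polynomial (Polynomial ℂ)} {a : Polynomial ℂ}
    (hP : IsHermitian P) (ha : a.Monic) (haP : C a ∣ P) : sepProduct a ∣ P := by
  have hconj : (a.map (starRingEnd ℂ)).map C ∣ P := by
    simpa only [conjSwap_C, (isHermitian_iff_conjSwap_eq P).mp hP] using map_dvd conjSwap haP
  obtain ⟨Q, rfl⟩ := hconj
  have haQ : C a ∣ Q := by
    rw [← dvd_content_iff_C_dvd] at haP ⊢
    rwa [content_mul, ha.isPrimitive_map_C_map_conj.content_eq_one, one_mul] at haP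
  obtain ⟨φ, rfl⟩ := haQ
  exact ⟨φ, by rw [sepProduct]; ring⟩

section Content

variable {R : Type*} [CommRing R] [NormalizedGCDMonoid R]

theorem forall_dvd_coeff_iff_dvd_content {p : R[X]} {b : R} :
    (∀ j, b ∣ p.coeff j) ↔ b ∣ p.content := by
  rw [dvd_content_iff_C_dvd, C_dvd_iff_dvd_coeff]

theorem isGCD_coeffs_iff_associated_content {p : R[X]} {a : R} :
    ((∀ j, a ∣ p.coeff j) ∧ ∀ b, (∀ j, b ∣ p.coeff j) → b ∣ a) ↔ Associated a p.content := by
  simp only [forall_dvd_coeff_iff_dvd_content]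
  exact ⟨fun ⟨h, hgcd⟩ => associated_of_dvd_dvd h (hgcd _ dvd_rfl),
    fun h => ⟨h.dvd, fun b hb => hb.trans h.symm.dvd⟩⟩

end Content

theorem isPrimitivePoly_iff_isUnit_content (P : Polynomial (Polynomial ℂ)) :
    IsPrimitivePoly P ↔ IsUnit P.content := by
  simp only [IsPrimitivePoly, forall_dvd_coeff_iff_dvd_content]
  exact ⟨fun h => h _ dvd_rfl, fun h b hb => isUnit_of_dvd_unit hb h⟩

/-- Principal factorization of a Hermitian polynomial: if `a` is the (monic) gcd of the
coefficient polynomials of `φ`, then `φ = a(z) conj(a(w)) φ₀` with `φ₀` a primitive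
Hermitian polynomial; conversely, any such factorization with `φ₀` primitive Hermitian
identifies the monic `a` as the principal divisor (gcd of the coefficients). -/
theorem principal_factorization :
    (∀ (P : Polynomial (Polynomial ℂ)) (a : Polynomial ℂ), IsHermitian P → P ≠ 0 →
      a.Monic → (∀ j : ℕ, a ∣ P.coeff j) →
      (∀ b : Polynomial ℂ, (∀ j : ℕ, b ∣ P.coeff j) → b ∣ a) →
      ∃ φ₀ : Polynomial (Polynomial ℂ), IsHermitian φ₀ ∧ IsPrimitivePoly φ₀ ∧
        P = sepProduct a * φ₀) ∧
    (∀ (P φ₀ : Polynomial (Polynomial ℂ)) (a : Polynomial ℂ), a.Monic →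
      IsHermitian φ₀ → IsPrimitivePoly φ₀ → P = sepProduct a * φ₀ →
      (∀ j : ℕ, a ∣ P.coeff j) ∧
      (∀ b : Polynomial ℂ, (∀ j : ℕ, b ∣ P.coeff j) → b ∣ a)) := by
  constructor
  · intro P a hP _ ha hdvd hgcd
    have hcontent := isGCD_coeffs_iff_associated_content.mp ⟨hdvd, hgcd⟩
    obtain ⟨φ₀, rfl⟩ := sepProduct_dvd_of_isHermitian hP ha ((C_dvd_iff_dvd_coeff _ _).mpr hdvd)
    refine ⟨φ₀, (isHermitian_sepProduct_mul_iff ha.ne_zero φ₀).mp hP, ?_, rfl⟩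
    have h : Associated (a * 1) (a * φ₀.content) := by rwa [mul_one, ← content_sepProduct_mul ha]
    rw [isPrimitivePoly_iff_isUnit_content, ← associated_one_iff_isUnit]
    exact (h.of_mul_left (Associated.refl a) ha.ne_zero).symm
  · rintro P φ₀ a ha - hφ₀ rfl
    rw [isGCD_coeffs_iff_associated_content, content_sepProduct_mul ha]
    exact associated_mul_unit_right a _ ((isPrimitivePoly_iff_isUnit_content φ₀).mp hφ₀)
end

section
/- For complex x, y in the unit polydisk with |x| + |y| < 1, the Appell F₂ function with parameters a=1, b=b'=1, c=c'=3/2 admits the integral/series identity F₂(1;1,1;3/2,3/2; x, y) = ∑_{k,m≥0} ((1)_{k+m}/((3/2)_k (3/2)_m)) x^k y^m = ∫₀¹∫₀¹ dξ dη / ((1 - x - y) + ξ² x + η² y), where (a)_r = Γ(a+r)/Γ(a) is the Pochhammer symbol. -/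
/-!
Substituting `u = 1 - ξ²`, `v = 1 - η²`, the integrand is `1 / (1 - u x - v y)`, which on the unit
square expands into the nonnegative double series `∑ C(k+m, k) (u x)^k (v y)^m`. Integrating term by
term (dominated convergence, the series dominating itself) and using
`∫₀¹ (1 - ξ²)^k dξ = k! / (3/2)_k` together with `C(k+m, k) k! m! = (k+m)! = (1)_{k+m}` gives the
coefficients of `F₂`.
-/

set_option autoImplicit false

open Real intervalIntegral

/-- The Pochhammer symbol `(a)_r = Γ(a+r)/Γ(a)`. -/
noncomputable def poch (a : ℝ) (r : ℕ) : ℝ := Real.Gamma (a + r) / Real.Gamma a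

open MeasureTheory Set
open scoped Nat

lemma poch_succ (a : ℝ) (r : ℕ) (h : a + r ≠ 0) : poch a (r + 1) = poch a r * (a + r) := by
  rw [poch, poch, Nat.cast_succ, ← add_assoc, Real.Gamma_add_one h]
  ring

lemma poch_pos {a : ℝ} (ha : 0 < a) (r : ℕ) : 0 < poch a r :=
  div_pos (Real.Gamma_pos_of_pos (by positivity)) (Real.Gamma_pos_of_pos ha)

lemma poch_one_eq_factorial (r : ℕ) : poch 1 r = r ! := by
  rw [poch, add_comm, Real.Gamma_nat_eq_factorial, Real.Gamma_one, div_one]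

lemma hasSum_choose_mul_pow_mul_pow {a b : ℝ} (ha : 0 ≤ a) (hb : 0 ≤ b) (hab : a + b < 1) :
    HasSum (fun p : ℕ × ℕ => ((p.1 + p.2).choose p.1 : ℝ) * a ^ p.1 * b ^ p.2)
      (1 / (1 - a - b)) := by
  have hb1 : 0 < 1 - b := by linarith
  have hrow (k : ℕ) : HasSum (fun m : ℕ => ((k + m).choose k : ℝ) * a ^ k * b ^ m)
      (a ^ k / (1 - b) ^ (k + 1)) := by
    have hb' : ‖b‖ < 1 := by rw [Real.norm_of_nonneg hb]; linarith
    rw [div_eq_mul_one_div]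
    refine ((hasSum_choose_mul_geometric_of_norm_lt_one k hb').mul_left (a ^ k)).congr_fun
      fun m => ?_
    rw [add_comm k m]
    ring
  have hcol : HasSum (fun k : ℕ => a ^ k / (1 - b) ^ (k + 1)) (1 / (1 - a - b)) := by
    have hr : a / (1 - b) < 1 := by rw [div_lt_one hb1]; linarith
    have hab₁ : 1 - a - b ≠ 0 := by linarith
    have hab₂ : 1 - b - a ≠ 0 := by linarith
    rw [show 1 / (1 - a - b) = (1 - a / (1 - b))⁻¹ / (1 - b) by field_simp; ring]
    refine ((hasSum_geometric_of_lt_one (by positivity) hr).div_const (1 - b)).congr_fun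
      fun k => ?_
    rw [div_pow, pow_succ]
    field_simp
  have hsummable : Summable fun p : ℕ × ℕ => ((p.1 + p.2).choose p.1 : ℝ) * a ^ p.1 * b ^ p.2 :=
    (summable_prod_of_nonneg fun p => by positivity).2
      ⟨fun k => (hrow k).summable, by simpa only [(hrow _).tsum_eq] using hcol.summable⟩
  obtain h := hsummable.hasSum
  rwa [(h.prod_fiberwise hrow).unique hcol] at h

lemma integral_one_sub_sq_pow_succ (k : ℕ) :
    ∫ t in (0:ℝ)..1, (1 - t ^ 2) ^ (k + 1)
      = (2 * (k : ℝ) + 2) / (2 * k + 3) * ∫ t in (0:ℝ)..1, (1 - t ^ 2) ^ k := by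
  have hderiv (t : ℝ) : HasDerivAt (fun t : ℝ => t * (1 - t ^ 2) ^ (k + 1))
      ((2 * (k : ℝ) + 3) * (1 - t ^ 2) ^ (k + 1) - (2 * k + 2) * (1 - t ^ 2) ^ k) t := by
    refine ((hasDerivAt_id' (x := t)).fun_mul
      (((hasDerivAt_pow 2 t).const_sub 1).fun_pow (k + 1))).congr_deriv ?_
    rw [Nat.add_sub_cancel]
    push_cast
    ring
  have hparts := integral_eq_sub_of_hasDerivAt (fun t _ => hderiv t)
    (Continuous.intervalIntegrable (by fun_prop) 0 1)
  rw [integral_sub (Continuous.intervalIntegrable (by fun_prop) 0 1)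
    (Continuous.intervalIntegrable (by fun_prop) 0 1), intervalIntegral.integral_const_mul,
    intervalIntegral.integral_const_mul] at hparts
  norm_num at hparts
  field_simp
  linarith

lemma integral_one_sub_sq_pow (k : ℕ) :
    ∫ t in (0:ℝ)..1, (1 - t ^ 2) ^ k = k ! / poch (3 / 2) k := by
  induction k with
  | zero => simp [poch, (Real.Gamma_pos_of_pos (by norm_num : (0:ℝ) < 3 / 2)).ne']
  | succ k ih =>
    have hk := (poch_pos (by norm_num : (0:ℝ) < 3 / 2) k).ne'
    rw [integral_one_sub_sq_pow_succ, ih, poch_succ _ _ (by positivity), Nat.factorial_succ]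
    push_cast
    field_simp
    ring

lemma hasSum_choose_mul_one_sub_sq {x y ξ η : ℝ} (hx : 0 ≤ x) (hy : 0 ≤ y) (hsum : x + y < 1)
    (hξ : ξ ^ 2 ≤ 1) (hη : η ^ 2 ≤ 1) :
    HasSum (fun p : ℕ × ℕ =>
        ((p.1 + p.2).choose p.1 : ℝ) * ((1 - ξ ^ 2) * x) ^ p.1 * ((1 - η ^ 2) * y) ^ p.2)
      (1 / ((1 - x - y) + ξ ^ 2 * x + η ^ 2 * y)) := by
  convert hasSum_choose_mul_pow_mul_pow (mul_nonneg (sub_nonneg.2 hξ) hx)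
    (mul_nonneg (sub_nonneg.2 hη) hy) (by nlinarith [sq_nonneg ξ, sq_nonneg η]) using 2
  ring

lemma integral_choose_mul_one_sub_sq (x y : ℝ) (p : ℕ × ℕ) :
    ∫ z, ((p.1 + p.2).choose p.1 : ℝ) * ((1 - z.1 ^ 2) * x) ^ p.1 * ((1 - z.2 ^ 2) * y) ^ p.2
        ∂(volume.restrict (Ioc (0:ℝ) 1)).prod (volume.restrict (Ioc (0:ℝ) 1))
      = poch 1 (p.1 + p.2) / (poch (3 / 2) p.1 * poch (3 / 2) p.2) * x ^ p.1 * y ^ p.2 := by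
  obtain ⟨k, m⟩ := p
  rw [integral_prod_mul (fun ξ : ℝ => ((k + m).choose k : ℝ) * ((1 - ξ ^ 2) * x) ^ k)
    (fun η : ℝ => ((1 - η ^ 2) * y) ^ m)]
  simp_rw [mul_pow]
  rw [MeasureTheory.integral_const_mul, MeasureTheory.integral_mul_const,
    MeasureTheory.integral_mul_const, ← integral_of_le zero_le_one,
    ← integral_of_le zero_le_one, integral_one_sub_sq_pow, integral_one_sub_sq_pow,
    poch_one_eq_factorial, ← Nat.add_choose_mul_factorial_mul_factorial, Nat.choose_symm_add]
  have hk := (poch_pos (by norm_num : (0:ℝ) < 3 / 2) k).ne'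
  have hm := (poch_pos (by norm_num : (0:ℝ) < 3 / 2) m).ne'
  push_cast
  field_simp

lemma integrable_one_div_one_sub_add_sq_mul {x y : ℝ} (hx : 0 ≤ x) (hy : 0 ≤ y)
    (hsum : x + y < 1) (μ : Measure (ℝ × ℝ)) [IsFiniteMeasure μ] :
    Integrable (fun z : ℝ × ℝ => 1 / ((1 - x - y) + z.1 ^ 2 * x + z.2 ^ 2 * y)) μ := by
  have hc : 0 < 1 - x - y := by linarith
  have hD (z : ℝ × ℝ) : 1 - x - y ≤ (1 - x - y) + z.1 ^ 2 * x + z.2 ^ 2 * y := by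
    nlinarith [mul_nonneg (sq_nonneg z.1) hx, mul_nonneg (sq_nonneg z.2) hy]
  refine Integrable.of_bound (Continuous.aestronglyMeasurable ?_) (1 / (1 - x - y))
    (ae_of_all _ fun z => ?_)
  · exact continuous_const.div (by fun_prop) fun z => (hc.trans_le (hD z)).ne'
  · rw [Real.norm_of_nonneg (one_div_nonneg.2 (hc.le.trans (hD z)))]
    exact one_div_le_one_div_of_le hc (hD z)

theorem appell_F2_integral_general (x y : ℝ) (hx : 0 ≤ x) (hy : 0 ≤ y) (hsum : x + y < 1) :
    HasSum
      (fun p : ℕ × ℕ =>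
        poch 1 (p.1 + p.2) / (poch (3 / 2) p.1 * poch (3 / 2) p.2) * x ^ p.1 * y ^ p.2)
      (∫ ξ in (0:ℝ)..1, ∫ η in (0:ℝ)..1,
        1 / ((1 - x - y) + ξ ^ 2 * x + η ^ 2 * y)) := by
  set μ : Measure ℝ := volume.restrict (Ioc 0 1)
  have hsq : ∀ᵐ z ∂(μ.prod μ), z.1 ^ 2 ≤ 1 ∧ z.2 ^ 2 ≤ 1 := by
    rw [Measure.prod_restrict]
    filter_upwards [ae_restrict_mem (measurableSet_Ioc.prod measurableSet_Ioc)] with z hz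
    exact ⟨pow_le_one₀ hz.1.1.le hz.1.2, pow_le_one₀ hz.2.1.le hz.2.2⟩
  have hint := integrable_one_div_one_sub_add_sq_mul hx hy hsum (μ.prod μ)
  have hiter := integral_prod _ hint
  simp only [μ, ← integral_of_le zero_le_one] at hiter
  rw [← hiter]
  have hseries := hsq.mono fun z hz => hasSum_choose_mul_one_sub_sq hx hy hsum hz.1 hz.2
  refine (hasSum_integral_of_dominated_convergence _
      (fun p => Continuous.aestronglyMeasurable (by fun_prop))
      (fun p => hsq.mono fun z hz => (Real.norm_of_nonneg ?_).le)
      (hseries.mono fun z hz => hz.summable)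
      (hint.congr (hseries.mono fun z hz => hz.tsum_eq.symm)) hseries).congr_fun
    fun p => (integral_choose_mul_one_sub_sq x y p).symm
  have := sub_nonneg.2 hz.1
  have := sub_nonneg.2 hz.2
  positivity

/-- Appell `F₂` with parameters `a=1, b=b'=1, c=c'=3/2`: the series
`∑_{k,m≥0} ((1)_{k+m}/((3/2)_k (3/2)_m)) x^k y^m` converges and equals the integral
`∫₀¹∫₀¹ dξ dη / ((1-x-y) + ξ²x + η²y)`. -/
theorem appell_F2_integral (x y : ℝ) (hx : 0 ≤ x) (hy : 0 ≤ y)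
    (hpos : 0 < x + y) (hsum : x + y < 1) :
    HasSum
      (fun p : ℕ × ℕ =>
        poch 1 (p.1 + p.2) / (poch (3 / 2) p.1 * poch (3 / 2) p.2) * x ^ p.1 * y ^ p.2)
      (∫ ξ in (0:ℝ)..1, ∫ η in (0:ℝ)..1,
        1 / ((1 - x - y) + ξ ^ 2 * x + η ^ 2 * y)) :=
  appell_F2_integral_general x y hx hy hsum
end
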